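/- Let n ≥ 2 and ε_2, …, ε_n ∈ {-1, 1}, and set α(ε_2, …, ε_n) = 1/2 + 1/4 + Σ_{2 ≤ i ≤ n} ε_i · 2^{-2^i}. Then the continued fraction expansion of α(ε_2, …, ε_n) is [0, 1, (2R)'], where R = R_{1, ε_2, …, ε_n} is the run-length sequence of the finite paperfolding word P_{1, ε_2, …, ε_n}, 2R means each entry of R is doubled, and the prime indicates the last term is increased by 1. -/

import Mathlib

/-- Paperfolding word; instructions are given with the most recent (last) instruction first. -/
def foldAux : List ℤ → List ℤ
  | [] => []
  | a :: f => foldAux f ++ a :: (foldAux f).reverse.map (fun x => -x)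

/-- `paper f` is the finite paperfolding word `P_f` for instructions `f = [f_0, f_1, …]`,
satisfying `P_ε = ε` and `P_{f·a} = P_f · a · (-P_f^R)`. -/
def paper (f : List ℤ) : List ℤ := foldAux f.reverse

/-- The sequence of lengths of the maximal runs (maximal blocks of equal symbols) of `w`. -/
def runLengths (w : List ℤ) : List ℕ := (w.splitBy (fun a b => a == b)).map List.length

/-- `p` (indexed from 1) is the infinite paperfolding sequence with instructions `f`,
i.e. every finite paperfolding word of a prefix of `f` is a prefix of `p`. -/
def IsLimit (f : ℕ → ℤ) (p : ℕ → ℤ) : Prop :=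
  ∀ m k, k < (paper ((List.range m).map f)).length →
    p (k + 1) = (paper ((List.range m).map f)).getD k 0

/-- `E` enumerates, in increasing order (`E 1 < E 2 < ⋯`, with the convention `E 0 = 0`),
the ending positions of the maximal runs of the sequence `p` (indexed from 1):
position `m ≥ 1` ends a run iff `p m ≠ p (m+1)`. -/
def IsRunEnds (p : ℕ → ℤ) (E : ℕ → ℕ) : Prop :=
  E 0 = 0 ∧ StrictMono E ∧ ∀ m, 1 ≤ m → ((∃ n, 1 ≤ n ∧ E n = m) ↔ p m ≠ p (m + 1))

/-- `cf [a₁, …, a_t]` is the value of the continued fraction `[0, a₁, …, a_t]`,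
i.e. `0 + 1/(a₁ + 1/(a₂ + ⋯ + 1/a_t))`. -/
def cf : List ℤ → ℚ
  | [] => 0
  | a :: l => 1 / (a + cf l)

/-!
Folding `w ↦ w a (-wᴿ)` turns the run lengths `K ++ [k]` of `w` into `K ++ [k + 1, k] ++ Kᴿ` or
`K ++ [k, k + 1] ++ Kᴿ`, according to whether `a` continues the last run of `w` or the first run
of `-wᴿ`. On the continued fraction `[0, 1, 2R, 1] = [0, 1, (2R)']` this is the folding lemma:
with `P` the continuant matrix of `U = 1, 2K`, the new matrix is `P M Pᵀ` for the product `M` of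
the two middle digit matrices, so the new denominator is the square `q²` of the old one and the
value moves by `±1/q²`, the sign being that of `a`. Starting from `[0, 1, 2, 1] = 3/4` with
`q = 4`, induction gives `q = 2^(2^n)` and the value `α`.
-/

namespace List

variable {α β : Type*}

theorem splitBy_reverse (r : α → α → Bool) (l : List α) :
    l.reverse.splitBy r = ((l.splitBy fun a b => r b a).map reverse).reverse := by
  rw [splitBy_eq_iff]
  refine ⟨?_, by simp [nil_notMem_splitBy], ?_, ?_⟩
  · rw [← reverse_flatten, flatten_splitBy]
  · simp only [mem_reverse, mem_map]
    rintro _ ⟨g, hg, rfl⟩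
    exact isChain_reverse.2 (isChain_of_mem_splitBy hg)
  · rw [isChain_reverse, isChain_map]
    refine (isChain_getLast_head_splitBy _ l).imp ?_
    rintro a b ⟨ha, hb, h⟩
    exact ⟨by simpa using hb, by simpa using ha, by simpa using h⟩

theorem splitBy_map (f : α → β) (r : β → β → Bool) (l : List α) :
    (l.map f).splitBy r = (l.splitBy fun a b => r (f a) (f b)).map (map f) := by
  rw [splitBy_eq_iff]
  refine ⟨?_, by simp [nil_notMem_splitBy], ?_, ?_⟩
  · rw [← map_flatten, flatten_splitBy]
  · simp only [mem_map]
    rintro _ ⟨g, hg, rfl⟩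
    exact (isChain_map f).2 (isChain_of_mem_splitBy hg)
  · rw [isChain_map]
    refine (isChain_getLast_head_splitBy _ l).imp ?_
    rintro a b ⟨ha, hb, h⟩
    exact ⟨by simpa using ha, by simpa using hb, by simpa [getLast_map, head_map] using h⟩

theorem splitBy_cons_of_splitBy_eq_cons {r : α → α → Bool} {a : α} {l g : List α}
    {G : List (List α)} (hl : l.splitBy r = g :: G) (ha : ∀ b ∈ l.head?, r a b) :
    (a :: l).splitBy r = (a :: g) :: G := by
  have hg : g ≠ [] := ne_nil_of_mem_splitBy (hl ▸ mem_cons_self)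
  have hlg : l = g ++ G.flatten := by rw [← flatten_cons, ← hl, flatten_splitBy]
  rw [splitBy_eq_iff]
  refine ⟨by simp [hlg], ?_, ?_, ?_⟩
  · have := hl ▸ nil_notMem_splitBy r l
    simp_all
  · intro m hm
    rcases mem_cons.1 hm with rfl | hm
    · refine (isChain_of_mem_splitBy (hl ▸ mem_cons_self)).cons fun b hb => ha b ?_
      rwa [hlg, head?_append_of_ne_nil _ hg]
    · exact isChain_of_mem_splitBy (hl ▸ mem_cons_of_mem _ hm)
  · have := hl ▸ isChain_getLast_head_splitBy r l
    cases G with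
    | nil => exact isChain_singleton _
    | cons h G =>
      rw [isChain_cons_cons] at this ⊢
      obtain ⟨⟨_, hh, hr⟩, hG⟩ := this
      exact ⟨⟨cons_ne_nil _ _, hh, by rwa [getLast_cons hg]⟩, hG⟩

end List

section RunLengths

variable {u v w : List ℤ}

theorem runLengths_append (h : ∀ x ∈ u.getLast?, ∀ y ∈ v.head?, x ≠ y) :
    runLengths (u ++ v) = runLengths u ++ runLengths v := by
  rw [runLengths, List.splitBy_append (by simpa using h), List.map_append]; rfl

theorem runLengths_reverse (w : List ℤ) : runLengths w.reverse = (runLengths w).reverse := by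
  have h : (fun a b : ℤ => b == a) = fun a b => a == b := by funext a b; exact Bool.beq_comm
  simp [runLengths, List.splitBy_reverse, h]

theorem runLengths_map_neg (w : List ℤ) : runLengths (w.map (-·)) = runLengths w := by
  have h : (fun a b : ℤ => -a == -b) = fun a b => a == b := by funext a b; simp
  simp [runLengths, List.splitBy_map, h, Function.comp_def]

theorem pos_of_mem_runLengths {k : ℕ} (hk : k ∈ runLengths w) : 0 < k := by
  obtain ⟨g, hg, rfl⟩ := List.mem_map.1 hk
  exact List.length_pos_of_ne_nil (List.ne_nil_of_mem_splitBy hg)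

theorem runLengths_ne_nil (hw : w ≠ []) : runLengths w ≠ [] := by
  simpa [runLengths] using hw

theorem runLengths_cons {a : ℤ} {k : ℕ} {K : List ℕ} (ha : w.head? = some a)
    (hw : runLengths w = k :: K) : runLengths (a :: w) = (k + 1) :: K := by
  obtain ⟨g, G, hsplit, rfl, rfl⟩ := List.map_eq_cons_iff.1 hw
  rw [runLengths, List.splitBy_cons_of_splitBy_eq_cons hsplit (by simp [ha])]
  simp

theorem runLengths_append_singleton {a : ℤ} {k : ℕ} {K : List ℕ} (ha : w.getLast? = some a)
    (hw : runLengths w = K ++ [k]) : runLengths (w ++ [a]) = K ++ [k + 1] := by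
  have h := runLengths_cons (w := w.reverse) (by simpa using ha)
    (by rw [runLengths_reverse, hw, List.reverse_append]; rfl)
  rw [← List.reverse_reverse (w ++ [a]), List.reverse_append, runLengths_reverse]
  simpa using congrArg List.reverse h

end RunLengths

section Continuant

open Matrix

variable {R : Type*} [CommRing R]

def cfMatrix (x : R) : Matrix (Fin 2) (Fin 2) R := !![x, 1; 1, 0]

/-- `continuant l 1 0 / continuant l 0 0` is the value of `cf l`, see `cf_eq_continuant`. -/
def continuant (l : List R) : Matrix (Fin 2) (Fin 2) R := (l.map cfMatrix).prod

@[simp]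
theorem continuant_nil : continuant ([] : List R) = 1 := rfl

@[simp]
theorem continuant_cons (x : R) (l : List R) :
    continuant (x :: l) = cfMatrix x * continuant l := List.prod_cons

@[simp]
theorem continuant_append (l₁ l₂ : List R) :
    continuant (l₁ ++ l₂) = continuant l₁ * continuant l₂ := by
  simp [continuant]

theorem continuant_reverse (l : List R) : continuant l.reverse = (continuant l)ᵀ := by
  have h : (fun x : R => (cfMatrix x)ᵀ) = cfMatrix := by
    funext x; ext i j; fin_cases i <;> fin_cases j <;> rfl
  rw [continuant, continuant, transpose_list_prod, List.map_map, Function.comp_def, h,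
    List.map_reverse]

theorem det_continuant (l : List R) : (continuant l).det = (-1) ^ l.length := by
  induction l with
  | nil => simp
  | cons x l ih =>
    rw [continuant_cons, det_mul, ih]
    simp [cfMatrix, det_fin_two, pow_succ']

/-- `cfMatrix (c - d) * cfMatrix (c + d) = v vᵀ + d • J` for `v = (c, 1)` and the rotation
`J = !![0, -1; 1, 0]`, and `P J Pᵀ = det P • J`. -/
theorem continuant_fold (U : List R) (c d : R) (hd : d ^ 2 = 1) :
    continuant (U ++ [c - d, c + d] ++ U.reverse) 0 0 = continuant (U ++ [c - 1, 1]) 0 0 ^ 2 ∧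
    continuant (U ++ [c - d, c + d] ++ U.reverse) 1 0 =
      continuant (U ++ [c - 1, 1]) 0 0 * continuant (U ++ [c - 1, 1]) 1 0 +
        d * (continuant U).det := by
  simp only [continuant_append, continuant_reverse, continuant_cons, continuant_nil, mul_one]
  simp only [cfMatrix, cons_mul, vecMul_cons, head_cons, smul_cons, smul_eq_mul, mul_one,
    smul_empty, tail_cons, one_smul, empty_vecMul, add_zero, add_cons, empty_add_empty, zero_smul,
    empty_mul, Equiv.symm_apply_apply, mul_apply, of_apply, cons_val', cons_val_fin_one,
    Fin.sum_univ_two, cons_val_zero, cons_val_one, transpose_apply, sub_add_cancel, det_fin_two]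
  constructor
  · linear_combination (-(continuant U 0 0) ^ 2) * hd
  · linear_combination (-(continuant U 0 0) * continuant U 1 0) * hd

end Continuant

theorem continuant_pos {R : Type*} [CommRing R] [LinearOrder R] [IsStrictOrderedRing R]
    {l : List R} (hl : ∀ x ∈ l, 0 < x) :
    0 < continuant l 0 0 ∧ 0 ≤ continuant l 1 0 := by
  induction l with
  | nil => simp
  | cons x l ih =>
    obtain ⟨h0, h1⟩ := ih fun y hy => hl y (List.mem_cons_of_mem x hy)
    have hx := hl x List.mem_cons_self
    simp only [continuant_cons, cfMatrix, Matrix.mul_apply, Matrix.of_apply, Matrix.cons_val',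
      Matrix.cons_val_fin_one, Matrix.cons_val_zero, Fin.sum_univ_two, Matrix.cons_val_one,
      one_mul, zero_mul, add_zero]
    constructor <;> nlinarith

theorem cf_eq_continuant {l : List ℤ} (hl : ∀ x ∈ l, 0 < x) :
    cf l = (continuant l 1 0 : ℤ) / (continuant l 0 0 : ℤ) := by
  induction l with
  | nil => simp [cf]
  | cons x l ih =>
    obtain ⟨h0, -⟩ := continuant_pos fun y hy => hl y (List.mem_cons_of_mem x hy)
    have hpos := (continuant_pos hl).1
    rw [cf, ih fun y hy => hl y (List.mem_cons_of_mem x hy)]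
    simp only [continuant_cons, cfMatrix, Matrix.mul_apply, Matrix.of_apply, Matrix.cons_val',
      Matrix.cons_val_fin_one, Matrix.cons_val_zero, Fin.sum_univ_two, Matrix.cons_val_one,
      one_mul, one_div, zero_mul, add_zero, Int.cast_add, Int.cast_mul] at hpos ⊢
    have : ((continuant l 0 0 : ℤ) : ℚ) ≠ 0 := by exact_mod_cast h0.ne'
    have : ((x * continuant l 0 0 + continuant l 1 0 : ℤ) : ℚ) ≠ 0 := by exact_mod_cast hpos.ne'
    push_cast at this
    field_simp

theorem cf_append_add_one (l : List ℤ) (x : ℤ) : cf (l ++ [x + 1]) = cf (l ++ [x, 1]) := by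
  induction l with
  | nil => simp [cf]
  | cons y l ih => simp [cf, ih]

section Folding

variable {w : List ℤ} {x : ℤ} {k : ℕ} {K : List ℕ}

theorem paper_append_singleton (f : List ℤ) (a : ℤ) :
    paper (f ++ [a]) = paper f ++ a :: (paper f).reverse.map (-·) := by
  simp [paper, foldAux]

theorem runLengths_reverse_map_neg (hw : runLengths w = K ++ [k]) :
    runLengths (w.reverse.map (-·)) = k :: K.reverse := by
  rw [runLengths_map_neg, runLengths_reverse, hw]
  simp

theorem runLengths_fold_self (hx : x ≠ 0) (hlast : w.getLast? = some x)
    (hw : runLengths w = K ++ [k]) :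
    runLengths (w ++ x :: w.reverse.map (-·)) = K ++ [k + 1, k] ++ K.reverse := by
  rw [← List.singleton_append, ← List.append_assoc, runLengths_append,
    runLengths_append_singleton hlast hw, runLengths_reverse_map_neg hw]
  · simp
  · simp [List.head?_reverse, hlast]
    omega

theorem runLengths_fold_neg (hx : x ≠ 0) (hlast : w.getLast? = some x)
    (hw : runLengths w = K ++ [k]) :
    runLengths (w ++ -x :: w.reverse.map (-·)) = K ++ [k, k + 1] ++ K.reverse := by
  rw [runLengths_append, runLengths_cons _ (runLengths_reverse_map_neg hw), hw]
  · simp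
  · simp [List.head?_reverse, hlast]
  · simp [hlast]
    omega

/-- The digits `[1, 2R, 1]` of a word with run lengths `R`: by `cf_append_add_one` the same
continued fraction as `[1, (2R)']`, but with a symmetric shape that survives folding. -/
def cfDigits (w : List ℤ) : List ℤ :=
  1 :: ((runLengths w).map (fun b : ℕ => 2 * (b : ℤ)) ++ [1])

theorem cfDigits_pos (w : List ℤ) : ∀ x ∈ cfDigits w, 0 < x := by
  simp only [cfDigits, List.mem_cons, List.mem_append, List.mem_map]
  rintro x (rfl | ⟨k, hk, rfl⟩ | rfl | h)
  · norm_num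
  · have := pos_of_mem_runLengths hk
    omega
  · norm_num
  · simp at h

theorem cfDigits_eq (hw : runLengths w = K ++ [k]) :
    cfDigits w = (1 :: K.map (fun b : ℕ => 2 * (b : ℤ))) ++ [(2 * (k : ℤ) + 1) - 1, 1] := by
  simp [cfDigits, hw]

theorem cfDigits_fold {a : ℤ} (hx : x = 1 ∨ x = -1) (ha : a = 1 ∨ a = -1)
    (hlast : w.getLast? = some x) (hw : runLengths w = K ++ [k]) :
    ∃ d : ℤ, d ^ 2 = 1 ∧ d * x = -a ∧
      cfDigits (w ++ a :: w.reverse.map (-·)) =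
        (1 :: K.map (fun b : ℕ => 2 * (b : ℤ))) ++ [(2 * (k : ℤ) + 1) - d, (2 * (k : ℤ) + 1) + d] ++
          (1 :: K.map (fun b : ℕ => 2 * (b : ℤ))).reverse := by
  have hx0 : x ≠ 0 := by omega
  rcases (show a = x ∨ a = -x by omega) with rfl | rfl
  · refine ⟨-1, by norm_num, by ring, ?_⟩
    rw [cfDigits, runLengths_fold_self hx0 hlast hw]
    simp only [List.append_assoc, List.cons_append, List.nil_append, List.map_append,
      List.map_cons, Nat.cast_add, Nat.cast_one, List.map_reverse, Int.reduceNeg, sub_neg_eq_add,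
      add_neg_cancel_right, List.reverse_cons, List.cons.injEq, List.append_cancel_left_eq,
      and_true, true_and]
    ring
  · refine ⟨1, by norm_num, by ring, ?_⟩
    rw [cfDigits, runLengths_fold_neg hx0 hlast hw]
    simp only [List.append_assoc, List.cons_append, List.nil_append, List.map_append,
      List.map_cons, Nat.cast_add, Nat.cast_one, List.map_reverse, add_sub_cancel_right,
      List.reverse_cons, List.cons.injEq, List.append_cancel_left_eq, and_true, true_and]
    ring

theorem cf_eq_cf_cfDigits (hw : w ≠ []) {R : List ℤ}
    (hR : R = (runLengths w).map (fun b : ℕ => 2 * (b : ℤ))) :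
    cf (1 :: (R.dropLast ++ [R.getLast! + 1])) = cf (cfDigits w) := by
  have hRne : R ≠ [] := by simpa [hR] using runLengths_ne_nil hw
  rw [List.getLast!_of_getLast? (List.getLast?_eq_some_getLast hRne), ← List.cons_append,
    cf_append_add_one, cfDigits, ← hR]
  conv_rhs => rw [← List.dropLast_append_getLast hRne]
  simp

end Folding

/-- `N` and `N * α` are the denominator and numerator of `cf (cfDigits w)`. -/
def FoldInvariant (w : List ℤ) (N : ℤ) (α : ℚ) : Prop :=
  w.head? = some 1 ∧ w.getLast? = some (-(-1) ^ (runLengths w).length) ∧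
    continuant (cfDigits w) 0 0 = N ∧ ((continuant (cfDigits w) 1 0 : ℤ) : ℚ) = N * α

theorem FoldInvariant.fold {w : List ℤ} {N : ℤ} {α : ℚ} {a : ℤ} (h : FoldInvariant w N α)
    (ha : a = 1 ∨ a = -1) :
    FoldInvariant (w ++ a :: w.reverse.map (-·)) (N ^ 2) (α + a / N ^ 2) := by
  obtain ⟨hhead, hlast, h00, h10⟩ := h
  have hN : N ≠ 0 := h00 ▸ (continuant_pos (cfDigits_pos w)).1.ne'
  have hw : w ≠ [] := by rintro rfl; simp at hhead
  obtain ⟨K, k, hR⟩ : ∃ K k, runLengths w = K ++ [k] := by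
    rcases List.eq_nil_or_concat (runLengths w) with h | h
    · exact absurd h (runLengths_ne_nil hw)
    · simpa using h
  set x : ℤ := -(-1) ^ (runLengths w).length with hx
  have hx1 : x = 1 ∨ x = -1 := by
    rcases neg_one_pow_eq_or ℤ (runLengths w).length with h | h <;> simp [hx, h]
  obtain ⟨d, hd, hdx, hS'⟩ := cfDigits_fold hx1 ha hlast hR
  set U : List ℤ := 1 :: K.map (fun b : ℕ => 2 * (b : ℤ))
  have hdet : (continuant U).det = -x := by
    rw [det_continuant]; simp [U, hx, hR, pow_succ]
  obtain ⟨h00', h10'⟩ := continuant_fold U (2 * (k : ℤ) + 1) d hd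
  rw [← cfDigits_eq hR] at h00' h10'
  refine ⟨?_, ?_, ?_, ?_⟩
  · simp [List.head?_append_of_ne_nil _ hw, hhead]
  · have hlen := congrArg List.length hS'
    simp only [cfDigits, List.length_cons, List.length_append, List.length_map,
      List.length_reverse] at hlen
    have heven : Even (runLengths (w ++ a :: w.reverse.map (-·))).length := ⟨U.length, by omega⟩
    rw [heven.neg_one_pow, List.getLast?_append_of_ne_nil _ (List.cons_ne_nil _ _)]
    simp [List.getLast?_cons, List.getLast?_reverse, hhead]
  · rw [hS', h00', h00]
  · rw [hS', h10', h00, hdet]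
    push_cast
    rw [h10]
    have hdx' : (d : ℚ) * x = -a := by exact_mod_cast hdx
    have hN2 : (N : ℚ) ^ 2 ≠ 0 := by positivity
    rw [mul_add, mul_div_cancel₀ _ hN2]
    linear_combination -hdx'

theorem foldInvariant_paper (ε : ℕ → ℤ) (m : ℕ)
    (hε : ∀ i, 2 ≤ i → i ≤ m + 1 → ε i = -1 ∨ ε i = 1) :
    FoldInvariant (paper (1 :: (List.range m).map (fun j => ε (j + 2)))) (2 ^ 2 ^ (m + 1))
      (1 / 2 + 1 / 4 + ∑ i ∈ Finset.Icc 2 (m + 1), (ε i : ℚ) / 2 ^ 2 ^ i) := by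
  induction m with
  | zero =>
    have h : runLengths [1] = [1] := rfl
    refine ⟨rfl, ?_, ?_, ?_⟩ <;>
      norm_num [paper, foldAux, cfDigits, h, cfMatrix, Matrix.mul_apply, Fin.sum_univ_two]
  | succ m ih =>
    rw [List.range_succ, List.map_append, List.map_singleton, ← List.cons_append,
      paper_append_singleton]
    have := (ih fun i h2 hi => hε i h2 (by omega)).fold (hε (m + 2) (by omega) le_rfl).symm
    convert this using 1
    · rw [← pow_mul, ← pow_succ]
    · rw [Finset.sum_Icc_succ_top (by omega)]
      push_cast
      ring

theorem cf_of_alpha_general (n : ℕ) (ε : ℕ → ℤ)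
    (hε : ∀ i, 2 ≤ i → i ≤ n → ε i = -1 ∨ ε i = 1)
    (R : List ℤ)
    (hR : R = (runLengths (paper (1 :: (List.range (n - 1)).map (fun j => ε (j + 2))))).map
      (fun b => (2 * b : ℤ))) :
    cf (1 :: (R.dropLast ++ [R.getLast! + 1])) =
      1 / 2 + 1 / 4 + ∑ i ∈ Finset.Icc 2 n, (ε i : ℚ) / 2 ^ (2 ^ i) := by
  obtain ⟨hhead, -, hN, hα⟩ := foldInvariant_paper ε (n - 1) fun i h2 hi => hε i h2 (by omega)
  set w := paper (1 :: (List.range (n - 1)).map (fun j => ε (j + 2)))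
  have hsum : ∑ i ∈ Finset.Icc 2 (n - 1 + 1), (ε i : ℚ) / 2 ^ 2 ^ i =
      ∑ i ∈ Finset.Icc 2 n, (ε i : ℚ) / 2 ^ 2 ^ i := by
    rcases n with _ | n <;> simp
  -- `hR` casts `runLengths _ : List ℕ` to `List ℤ` through the list monad, i.e. by a `flatMap`.
  have hRw : R = (runLengths w).map (fun b : ℕ => 2 * (b : ℤ)) := by
    simp only [hR, List.bind_eq_flatMap, List.map_flatMap]
    exact List.map_eq_flatMap.symm
  rw [cf_eq_cf_cfDigits (by rintro h; simp [h] at hhead) hRw,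
    cf_eq_continuant (cfDigits_pos w), hN, hα, ← hsum]
  push_cast
  field_simp

theorem cf_of_alpha (n : ℕ) (hn : 2 ≤ n) (ε : ℕ → ℤ)
    (hε : ∀ i, 2 ≤ i → i ≤ n → ε i = -1 ∨ ε i = 1)
    (R : List ℤ)
    (hR : R = (runLengths (paper (1 :: (List.range (n - 1)).map (fun j => ε (j + 2))))).map
      (fun b => (2 * b : ℤ))) :
    cf (1 :: (R.dropLast ++ [R.getLast! + 1])) =
      1 / 2 + 1 / 4 + ∑ i ∈ Finset.Icc 2 n, (ε i : ℚ) / 2 ^ (2 ^ i) :=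
  cf_of_alpha_general n ε hε R hR
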